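/- Assume D is a block: D is nonzero, every object is a finite direct sum of indecomposables, and the indecomposable objects are path-connected. If there exists an indecomposable object X of D such that there is no path from X[1] to X, then D admits a bounded hereditary t-structure; one may take its heart to be add(U ∩ V[1]), where U = [X→] is the class of indecomposable objects admitting a path from X and V is the complement of U in the class of indecomposables. -/

import Mathlib

open CategoryTheory CategoryTheory.Limits CategoryTheory.Pretriangulated

universe v u

variable (C : Type u) [Category.{v} C] [Preadditive C] [HasZeroObject C]
  [HasShift C ℤ] [∀ n : ℤ, (shiftFunctor C n).Additive] [Pretriangulated C]
  [HasFiniteBiproducts C]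

/-- An object is indecomposable if it is nonzero and any biproduct decomposition is trivial. -/
def Indec (X : C) : Prop :=
  ¬ IsZero X ∧ ∀ (A B : C), (X ≅ A ⊞ B) → IsZero A ∨ IsZero B

/-- There is a path from `X` to `Y`: a sequence of indecomposables where each consecutive
pair admits a nonzero morphism, or the next one is the shift of the previous one. -/
def HasPath (X Y : C) : Prop :=
  ∃ (n : ℕ) (f : Fin (n + 1) → C), f 0 = X ∧ f (Fin.last n) = Y ∧
    (∀ i, Indec C (f i)) ∧
    ∀ i : Fin n, (∃ g : f i.castSucc ⟶ f i.succ, g ≠ 0) ∨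
      Nonempty (f i.succ ≅ (f i.castSucc)⟦(1 : ℤ)⟧)

/-- Two indecomposables are connected by a sequence of paths and inverse paths. -/
def PathConn (X Y : C) : Prop :=
  ∃ (n : ℕ) (f : Fin (n + 1) → C), f 0 = X ∧ f (Fin.last n) = Y ∧
    (∀ i, Indec C (f i)) ∧
    ∀ i : Fin n, (∃ g : f i.castSucc ⟶ f i.succ, g ≠ 0) ∨
      (∃ g : f i.succ ⟶ f i.castSucc, g ≠ 0) ∨
      ∃ s : ℤ, Nonempty (f i.succ ≅ (f i.castSucc)⟦s⟧)

/-- Every object is a finite direct sum of indecomposable objects. -/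
def EveryObjectDecomposes : Prop :=
  ∀ X : C, ∃ (n : ℕ) (f : Fin n → C), (∀ i, Indec C (f i)) ∧ Nonempty (X ≅ ⨁ f)

/-- `D` is a block: nonzero, Krull-Schmidt-type decomposition, and path-connected. -/
def IsBlock : Prop :=
  (∃ X : C, ¬ IsZero X) ∧ EveryObjectDecomposes C ∧
    ∀ X Y : C, Indec C X → Indec C Y → PathConn C X Y

/-- `add S`: objects isomorphic to finite direct sums of objects of `S`. -/
def addClosure (S : Set C) : Set C :=
  {X | ∃ (n : ℕ) (f : Fin n → C), (∀ i, f i ∈ S) ∧ Nonempty (X ≅ ⨁ f)}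

/-- A `t`-structure `(D^{≤0}, D^{≥0})` on `C`. -/
structure TStruct where
  le : Set C
  ge : Set C
  le_iso : ∀ ⦃X Y : C⦄, (X ≅ Y) → X ∈ le → Y ∈ le
  ge_iso : ∀ ⦃X Y : C⦄, (X ≅ Y) → X ∈ ge → Y ∈ ge
  hom_zero : ∀ ⦃X Y : C⦄, X ∈ le → Y ∈ ge → ∀ f : X ⟶ Y⟦(-1 : ℤ)⟧, f = 0
  le_shift : ∀ ⦃X : C⦄, X ∈ le → X⟦(1 : ℤ)⟧ ∈ le
  ge_shift : ∀ ⦃X : C⦄, X ∈ ge → X⟦(-1 : ℤ)⟧ ∈ ge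
  exists_triangle : ∀ X : C, ∃ (A B : C) (f : A ⟶ X) (g : X ⟶ B⟦(-1 : ℤ)⟧)
      (h : B⟦(-1 : ℤ)⟧ ⟶ A⟦(1 : ℤ)⟧),
      (Triangle.mk f g h ∈ distTriang C) ∧ A ∈ le ∧ B ∈ ge

variable {C}

/-- The heart of a t-structure. -/
def TStruct.heart (t : TStruct C) : Set C := t.le ∩ t.ge

/-- A t-structure is bounded if every object lies in `D^{≤n} ∩ D^{≥m}` for some `m ≤ n`,
where `X ∈ D^{≤n} := D^{≤0}[-n]` iff `X⟦n⟧ ∈ D^{≤0}`, and similarly for `D^{≥m}`. -/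
def TStruct.Bounded (t : TStruct C) : Prop :=
  ∀ X : C, ∃ m n : ℤ, m ≤ n ∧ X⟦n⟧ ∈ t.le ∧ X⟦m⟧ ∈ t.ge

/-- A bounded t-structure is hereditary if `Hom(X, Y⟦n⟧) = 0` for all `X`, `Y` in the heart
and `n ≥ 2`. -/
def TStruct.Hereditary (t : TStruct C) : Prop :=
  t.Bounded ∧ ∀ ⦃X Y : C⦄, X ∈ t.heart → Y ∈ t.heart →
    ∀ n : ℤ, 2 ≤ n → ∀ f : X ⟶ Y⟦n⟧, f = 0

variable (C)

/-! ### Auxiliary machinery -/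

section AuxPath
set_option linter.unusedSectionVars false

variable {C}

open Relation

/-- Generic conversion: finite sequences to `ReflTransGen`. -/
lemma seq_to_rtg (S : C → C → Prop) (P : C → Prop) :
    ∀ (n : ℕ) (f : Fin (n + 1) → C), (∀ i, P (f i)) →
      (∀ i : Fin n, S (f i.castSucc) (f i.succ)) →
      Relation.ReflTransGen (fun a b => P a ∧ P b ∧ S a b) (f 0) (f (Fin.last n)) := by
  intro n
  induction n with
  | zero => intro f _ _; exact Relation.ReflTransGen.refl
  | succ n ih =>
    intro f hP hS
    have h1 := ih (fun i => f i.castSucc) (fun i => hP _) (fun i => by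
      have := hS i.castSucc
      rw [Fin.succ_castSucc] at this; exact this)
    simp only [Fin.castSucc_zero] at h1
    refine h1.tail ?_
    refine ⟨hP _, hP _, ?_⟩
    have := hS (Fin.last n)
    simpa [Fin.succ_last] using this

/-- Generic conversion: `ReflTransGen` to finite sequences. -/
lemma rtg_to_seq (S : C → C → Prop) (P : C → Prop) {X Y : C} (hX : P X)
    (h : Relation.ReflTransGen (fun a b => P a ∧ P b ∧ S a b) X Y) :
    ∃ (n : ℕ) (f : Fin (n + 1) → C), f 0 = X ∧ f (Fin.last n) = Y ∧
      (∀ i, P (f i)) ∧ ∀ i : Fin n, S (f i.castSucc) (f i.succ) := by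
  induction h with
  | refl => exact ⟨0, fun _ => X, rfl, rfl, fun _ => hX, fun i => i.elim0⟩
  | @tail b c hab hbc ih =>
    obtain ⟨n, f, h0, hl, hP, hS⟩ := ih
    refine ⟨n + 1, Fin.snoc f c, ?_, ?_, ?_, ?_⟩
    · rw [show (0 : Fin (n + 2)) = Fin.castSucc 0 by simp, Fin.snoc_castSucc]; exact h0
    · rw [Fin.snoc_last]
    · intro i
      induction i using Fin.lastCases with
      | last => rw [Fin.snoc_last]; exact hbc.2.1
      | cast j => rw [Fin.snoc_castSucc]; exact hP j
    · intro i
      induction i using Fin.lastCases with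
      | last => rw [Fin.succ_last, Fin.snoc_last, Fin.snoc_castSucc, hl]; exact hbc.2.2
      | cast j =>
        rw [Fin.succ_castSucc, Fin.snoc_castSucc, Fin.snoc_castSucc]
        exact hS j

/-- The step relation for `HasPath`. -/
def PRel (a b : C) : Prop :=
  Indec C a ∧ Indec C b ∧
    ((∃ g : a ⟶ b, g ≠ 0) ∨ Nonempty (b ≅ a⟦(1 : ℤ)⟧))

/-- The step relation for `PathConn`. -/
def CRel (a b : C) : Prop :=
  Indec C a ∧ Indec C b ∧
    ((∃ g : a ⟶ b, g ≠ 0) ∨ (∃ g : b ⟶ a, g ≠ 0) ∨ ∃ s : ℤ, Nonempty (b ≅ a⟦s⟧))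

lemma hasPath_iff {X Y : C} :
    HasPath C X Y ↔ Indec C X ∧ Relation.ReflTransGen (PRel (C := C)) X Y := by
  constructor
  · rintro ⟨n, f, h0, hl, hP, hS⟩
    subst h0; subst hl
    refine ⟨hP 0, ?_⟩
    have := seq_to_rtg (fun a b => (∃ g : a ⟶ b, g ≠ 0) ∨ Nonempty (b ≅ a⟦(1 : ℤ)⟧))
      (Indec C) n f hP hS
    exact Relation.ReflTransGen.mono (fun a b hab => ⟨hab.1, hab.2.1, hab.2.2⟩) _ _ this
  · rintro ⟨hX, hrtg⟩
    obtain ⟨n, f, h0, hl, hP, hS⟩ := rtg_to_seq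
      (fun a b => (∃ g : a ⟶ b, g ≠ 0) ∨ Nonempty (b ≅ a⟦(1 : ℤ)⟧)) (Indec C) hX
      (Relation.ReflTransGen.mono (fun a b hab => ⟨hab.1, hab.2.1, hab.2.2⟩) _ _ hrtg)
    exact ⟨n, f, h0, hl, hP, hS⟩

lemma pathConn_rtg {X Y : C} (h : PathConn C X Y) :
    Relation.ReflTransGen (CRel (C := C)) X Y := by
  obtain ⟨n, f, h0, hl, hP, hS⟩ := h
  subst h0; subst hl
  have := seq_to_rtg (fun a b => (∃ g : a ⟶ b, g ≠ 0) ∨ (∃ g : b ⟶ a, g ≠ 0) ∨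
      ∃ s : ℤ, Nonempty (b ≅ a⟦s⟧)) (Indec C) n f hP hS
  exact Relation.ReflTransGen.mono (fun a b hab => ⟨hab.1, hab.2.1, hab.2.2⟩) _ _ this

end AuxPath
section AuxShift
set_option linter.unusedSectionVars false

variable {C}

/-- `Y⟦c⟧ ≅ (Y⟦a⟧)⟦b⟧` when `a + b = c`. -/
noncomputable def shAdd (a b c : ℤ) (h : a + b = c) (Y : C) : Y⟦c⟧ ≅ (Y⟦a⟧)⟦b⟧ :=
  (shiftFunctorAdd' C a b c h).app Y

noncomputable def shZero (Y : C) : Y⟦(0 : ℤ)⟧ ≅ Y := (shiftFunctorZero C ℤ).app Y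

lemma comp_iso_ne_zero {a b b' : C} {f : a ⟶ b} (hf : f ≠ 0) (e : b ≅ b') :
    f ≫ e.hom ≠ 0 := by
  intro hz
  apply hf
  have := congrArg (fun t => t ≫ e.inv) hz
  simpa using this

lemma iso_comp_ne_zero {a a' b : C} {f : a ⟶ b} (hf : f ≠ 0) (e : a' ≅ a) :
    e.hom ≫ f ≠ 0 := by
  intro hz
  apply hf
  have := congrArg (fun t => e.inv ≫ t) hz
  simpa using this

lemma shift_map_ne_zero {a b : C} {f : a ⟶ b} (hf : f ≠ 0) (s : ℤ) :
    (shiftFunctor C s).map f ≠ 0 := by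
  intro hz
  exact hf ((shiftFunctor C s).map_injective (by simpa using hz))

lemma isZero_of_shift {Y : C} (s : ℤ) (hz : IsZero (Y⟦s⟧)) : IsZero Y := by
  have h2 : IsZero ((Y⟦s⟧)⟦-s⟧) := by
    rw [IsZero.iff_id_eq_zero] at hz ⊢
    have := congrArg (fun g => (shiftFunctor C (-s)).map g) hz
    simpa using this
  exact h2.of_iso ((shZero Y).symm ≪≫ shAdd s (-s) 0 (by ring) Y)

lemma Indec.of_iso {Y Z : C} (h : Indec C Y) (e : Z ≅ Y) : Indec C Z :=
  ⟨fun hz => h.1 (hz.of_iso e.symm), fun A B eAB => h.2 A B (e.symm ≪≫ eAB)⟩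

lemma Indec.shift {Y : C} (h : Indec C Y) (s : ℤ) : Indec C (Y⟦s⟧) := by
  constructor
  · exact fun hz => h.1 (isZero_of_shift s hz)
  · intro A B e
    haveI := preservesBinaryBiproduct_of_preservesBiproduct (shiftFunctor C (-s)) A B
    have e' : Y ≅ A⟦(-s : ℤ)⟧ ⊞ B⟦(-s : ℤ)⟧ :=
      (shZero Y).symm ≪≫ shAdd s (-s) 0 (by ring) Y ≪≫
        (shiftFunctor C (-s)).mapIso e ≪≫ (shiftFunctor C (-s)).mapBiprod A B
    rcases h.2 _ _ e' with hA | hB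
    · exact Or.inl (isZero_of_shift (-s) hA)
    · exact Or.inr (isZero_of_shift (-s) hB)

lemma Indec.ne_zero_iso {Y Z : C} (h : Indec C Y) (e : Y ≅ Z) : e.hom ≠ 0 := by
  intro hz
  apply h.1
  rw [IsZero.iff_id_eq_zero, ← e.hom_inv_id, hz, Limits.zero_comp]

end AuxShift

section AuxPath2
set_option linter.unusedSectionVars false

variable {C}

lemma HasPath.indec_src {X Y : C} (h : HasPath C X Y) : Indec C X :=
  (hasPath_iff.1 h).1

lemma HasPath.indec_tgt {X Y : C} (h : HasPath C X Y) : Indec C Y := by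
  obtain ⟨hX, hr⟩ := hasPath_iff.1 h
  induction hr with
  | refl => exact hX
  | tail _ hbc _ => exact hbc.2.1

lemma hasPath_refl {Y : C} (h : Indec C Y) : HasPath C Y Y :=
  hasPath_iff.2 ⟨h, Relation.ReflTransGen.refl⟩

lemma HasPath.trans {X Y Z : C} (h1 : HasPath C X Y) (h2 : HasPath C Y Z) :
    HasPath C X Z :=
  hasPath_iff.2 ⟨h1.indec_src, (hasPath_iff.1 h1).2.trans (hasPath_iff.1 h2).2⟩

lemma HasPath.homStep {X Y Z : C} (h : HasPath C X Y) (g : Y ⟶ Z) (hg : g ≠ 0)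
    (hZ : Indec C Z) : HasPath C X Z :=
  hasPath_iff.2 ⟨h.indec_src,
    (hasPath_iff.1 h).2.tail ⟨h.indec_tgt, hZ, Or.inl ⟨g, hg⟩⟩⟩

lemma HasPath.shiftStep {X Y : C} (h : HasPath C X Y) : HasPath C X (Y⟦(1 : ℤ)⟧) :=
  hasPath_iff.2 ⟨h.indec_src,
    (hasPath_iff.1 h).2.tail ⟨h.indec_tgt, h.indec_tgt.shift 1, Or.inr ⟨Iso.refl _⟩⟩⟩

/-- Replace the target of a path by an isomorphic object. -/
lemma HasPath.isoTgt {X Y Z : C} (h : HasPath C X Y) (e : Z ≅ Y) : HasPath C X Z :=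
  h.homStep e.symm.hom (h.indec_tgt.ne_zero_iso e.symm) (h.indec_tgt.of_iso e)

/-- Replace the source of a path by an isomorphic object. -/
lemma HasPath.isoSrc {X Y Z : C} (h : HasPath C X Y) (e : Z ≅ X) : HasPath C Z Y :=
  HasPath.trans ((hasPath_refl (h.indec_src.of_iso e)).homStep e.hom
    ((h.indec_src.of_iso e).ne_zero_iso e) h.indec_src) h

/-- Shifting a whole path. -/
lemma HasPath.shift {X Y : C} (h : HasPath C X Y) (s : ℤ) :
    HasPath C (X⟦s⟧) (Y⟦s⟧) := by
  obtain ⟨hX, hr⟩ := hasPath_iff.1 h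
  refine hasPath_iff.2 ⟨hX.shift s, ?_⟩
  refine Relation.ReflTransGen.lift (p := PRel) (fun W => W⟦s⟧) (fun a b hab' => ?_) _ _ hr
  obtain ⟨ha, hb, hab⟩ := hab'
  refine ⟨ha.shift s, hb.shift s, ?_⟩
  rcases hab with ⟨g, hg⟩ | he
  · exact Or.inl ⟨(shiftFunctor C s).map g, shift_map_ne_zero hg s⟩
  · obtain ⟨e⟩ := he
    exact Or.inr ⟨(shiftFunctor C s).mapIso e ≪≫
      (shAdd 1 s (1 + s) rfl a).symm ≪≫ shAdd s 1 (1 + s) (by ring) a⟩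

lemma HasPath.shift_up_nat {X Y : C} (h : HasPath C X Y) (j : ℕ) :
    HasPath C X (Y⟦(j : ℤ)⟧) := by
  induction j with
  | zero => exact h.isoTgt (shZero Y)
  | succ j ih =>
    exact ih.shiftStep.isoTgt ((shAdd j 1 (j + 1 : ℕ) (by push_cast; ring) Y).symm).symm

lemma HasPath.shift_mono {X Y : C} {n n' : ℤ} (h : HasPath C X (Y⟦n⟧)) (hn : n ≤ n') :
    HasPath C X (Y⟦n'⟧) := by
  have h1 := h.shift_up_nat (n' - n).toNat
  exact h1.isoTgt (shAdd n ((n' - n).toNat : ℤ) n'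
    (by rw [Int.toNat_of_nonneg (by omega)]; ring) Y)

end AuxPath2
section AuxAdd
set_option linter.unusedSectionVars false

variable {C}

lemma addClosure_iso {S : Set C} {Y Z : C} (h : Y ∈ addClosure C S) (e : Z ≅ Y) :
    Z ∈ addClosure C S := by
  obtain ⟨n, f, hf, ⟨e'⟩⟩ := h
  exact ⟨n, f, hf, ⟨e ≪≫ e'⟩⟩

lemma isZero_biproduct_elim0 : IsZero (⨁ (Fin.elim0 : Fin 0 → C)) := by
  rw [IsZero.iff_id_eq_zero]
  apply biproduct.hom_ext
  intro j
  exact j.elim0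

lemma addClosure_of_isZero {S : Set C} {Y : C} (h : IsZero Y) : Y ∈ addClosure C S :=
  ⟨0, Fin.elim0, fun i => i.elim0, ⟨h.isoZero ≪≫ isZero_biproduct_elim0.isoZero.symm⟩⟩

lemma addClosure_single {S : Set C} {Y : C} (h : Y ∈ S) : Y ∈ addClosure C S := by
  refine ⟨1, fun _ => Y, fun _ => h, ⟨?_⟩⟩
  refine ⟨biproduct.lift fun _ => 𝟙 Y, biproduct.π _ 0, by simp, ?_⟩
  apply biproduct.hom_ext
  intro j
  have hj : j = 0 := Subsingleton.elim j 0
  subst hj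
  simp

/-- The iso `⨁ f ≅ f 0 ⊞ ⨁ (f ∘ succ)`. -/
noncomputable def biproductSuccIso {n : ℕ} (f : Fin (n + 1) → C) :
    (⨁ f) ≅ f 0 ⊞ ⨁ (fun i : Fin n => f i.succ) where
  hom := biprod.lift (biproduct.π f 0) (biproduct.lift fun i => biproduct.π f i.succ)
  inv := biprod.desc (biproduct.ι f 0) (biproduct.desc fun i => biproduct.ι f i.succ)
  hom_inv_id := by
    rw [biprod.lift_desc, biproduct.lift_desc, ← biproduct.total, Fin.sum_univ_succ]
  inv_hom_id := by
    apply biprod.hom_ext'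
    · apply biprod.hom_ext
      · simp
      · apply biproduct.hom_ext
        intro k
        simp only [biproduct.ι_π, Category.assoc, biprod.lift_snd, biproduct.lift_π,
          zero_comp, comp_zero, biprod.inl_desc_assoc]
        rw [dif_neg (fun h => (Fin.succ_ne_zero k) h.symm)]
        simp
    · apply biprod.hom_ext
      · apply biproduct.hom_ext'
        intro j
        simp only [biproduct.ι_π, Category.assoc, biprod.lift_fst, biproduct.ι_desc_assoc,
          zero_comp, comp_zero, biprod.inr_desc_assoc]
        rw [dif_neg (Fin.succ_ne_zero j)]
        simp
      · apply biproduct.hom_ext'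
        intro j
        apply biproduct.hom_ext
        intro k
        by_cases hjk : j = k
        · subst hjk; simp
        · simp [biproduct.ι_π, hjk, fun h => hjk (Fin.succ_injective _ h)]

lemma addClosure_biprod {S : Set C} {x Y : C} (hx : x ∈ S) (hY : Y ∈ addClosure C S) :
    (x ⊞ Y) ∈ addClosure C S := by
  obtain ⟨n, f, hf, ⟨e⟩⟩ := hY
  refine ⟨n + 1, Fin.cons x f, ?_, ?_⟩
  · intro i
    induction i using Fin.cases with
    | zero => simpa using hx
    | succ j => simpa using hf j
  · refine ⟨?_⟩
    refine (biprod.mapIso (Iso.refl x) e) ≪≫ ?_ ≪≫ (biproductSuccIso (Fin.cons x f)).symm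
    exact biprod.mapIso (Iso.refl x) (biproduct.mapIso fun i => eqToIso (by simp))
end AuxAdd
section AuxComp
set_option linter.unusedSectionVars false

variable {C}

lemma addClosure_mono {S T : Set C} (h : S ⊆ T) : addClosure C S ⊆ addClosure C T := by
  rintro Y ⟨n, f, hf, ⟨e⟩⟩
  exact ⟨n, f, fun i => h (hf i), ⟨e⟩⟩

lemma addClosure_shift {S S' : Set C} {s : ℤ} (hmap : ∀ Z ∈ S, (Z⟦s⟧) ∈ S') {Y : C}
    (h : Y ∈ addClosure C S) : (Y⟦s⟧) ∈ addClosure C S' := by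
  obtain ⟨n, f, hf, ⟨e⟩⟩ := h
  refine ⟨n, fun i => (f i)⟦s⟧, fun i => hmap _ (hf i), ⟨?_⟩⟩
  exact (shiftFunctor C s).mapIso e ≪≫ (shiftFunctor C s).mapBiproduct f

lemma hom_eq_zero_of_components {A B : C} {n m : ℕ} {a : Fin n → C} {b : Fin m → C}
    (α : A ≅ ⨁ a) (β : B ≅ ⨁ b)
    (hcomp : ∀ i j (φ : a i ⟶ b j), φ = 0) (f : A ⟶ B) : f = 0 := by
  have hmid : α.inv ≫ f ≫ β.hom = 0 := by
    apply biproduct.hom_ext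
    intro j
    apply biproduct.hom_ext'
    intro i
    have := hcomp i j (biproduct.ι a i ≫ α.inv ≫ f ≫ β.hom ≫ biproduct.π b j)
    simpa using this
  have hf : f = α.hom ≫ (α.inv ≫ f ≫ β.hom) ≫ β.inv := by simp
  rw [hf, hmid]
  simp

lemma isZero_component {Y : C} {n m : ℕ} {a : Fin n → C} {b : Fin m → C}
    (α : Y ≅ ⨁ a) (β : Y ≅ ⨁ b) (i : Fin n)
    (hcomp : ∀ j (φ : a i ⟶ b j), φ = 0) : IsZero (a i) := by
  rw [IsZero.iff_id_eq_zero]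
  have key : (𝟙 (a i) : a i ⟶ a i) =
      ∑ j : Fin m, biproduct.ι a i ≫ α.inv ≫ β.hom ≫ biproduct.π b j ≫
        biproduct.ι b j ≫ β.inv ≫ α.hom ≫ biproduct.π a i := by
    calc (𝟙 (a i) : a i ⟶ a i)
        = biproduct.ι a i ≫ α.inv ≫ β.hom ≫
            (∑ j : Fin m, biproduct.π b j ≫ biproduct.ι b j) ≫ β.inv ≫ α.hom ≫
            biproduct.π a i := by
          rw [biproduct.total]; simp
      _ = _ := by
          simp only [Preadditive.sum_comp, Preadditive.comp_sum, Category.assoc]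
  rw [key]
  apply Finset.sum_eq_zero
  intro j _
  have h0 : biproduct.ι a i ≫ α.inv ≫ β.hom ≫ biproduct.π b j = 0 := hcomp j _
  have h2 := congrArg
    (fun t => t ≫ (biproduct.ι b j ≫ β.inv ≫ α.hom ≫ biproduct.π a i)) h0
  simpa using h2

end AuxComp
section AuxCone
set_option linter.unusedSectionVars false

variable {C}

/-- The key "cone" lemma: a nonzero map `a ⟶ b` yields either an
indecomposable `c` with nonzero maps `b ⟶ c` and `c ⟶ a⟦1⟧`, or a nonzero map `b ⟶ a`. -/
lemma cone_path (hdec : EveryObjectDecomposes C) {a b : C}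
    (f : a ⟶ b) (hf : f ≠ 0) :
    (∃ c : C, Indec C c ∧ (∃ g : b ⟶ c, g ≠ 0) ∧ (∃ e : c ⟶ a⟦(1 : ℤ)⟧, e ≠ 0)) ∨
    (∃ p : b ⟶ a, p ≠ 0) := by
  classical
  obtain ⟨c, g, h, hT⟩ := Pretriangulated.distinguished_cocone_triangle f
  obtain ⟨n, F, hF, ⟨ψ⟩⟩ := hdec c
  by_cases hcase : ∃ i, (g ≫ ψ.hom ≫ biproduct.π F i ≠ 0) ∧
      (biproduct.ι F i ≫ ψ.inv ≫ h ≠ 0)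
  · obtain ⟨i, h1, h2⟩ := hcase
    exact Or.inl ⟨F i, hF i, ⟨_, h1⟩, ⟨_, h2⟩⟩
  · right
    push_neg at hcase
    set S : Finset (Fin n) :=
      Finset.univ.filter (fun i => biproduct.ι F i ≫ ψ.inv ≫ h = 0) with hSdef
    set x : c ⟶ c :=
      ψ.hom ≫ (∑ i ∈ S, biproduct.π F i ≫ biproduct.ι F i) ≫ ψ.inv with hxdef
    have hsum : (∑ i ∈ S, biproduct.π F i ≫ biproduct.ι F i) ≫ ψ.inv ≫ h = 0 := by
      rw [Preadditive.sum_comp]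
      apply Finset.sum_eq_zero
      intro i hi
      have hi0 : biproduct.ι F i ≫ ψ.inv ≫ h = 0 := by
        simpa [hSdef] using hi
      rw [Category.assoc, hi0, comp_zero]
    have hxh : x ≫ h = 0 := by
      rw [hxdef]
      simp only [Category.assoc]
      rw [hsum, comp_zero]
    have hsum2 : ∑ i ∈ S, (g ≫ ψ.hom ≫ biproduct.π F i ≫ biproduct.ι F i ≫ ψ.inv)
        = ∑ i : Fin n, (g ≫ ψ.hom ≫ biproduct.π F i ≫ biproduct.ι F i ≫ ψ.inv) := by
      apply Finset.sum_subset (Finset.subset_univ S)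
      intro i _ hiS
      have hne : biproduct.ι F i ≫ ψ.inv ≫ h ≠ 0 := by
        simpa [hSdef] using hiS
      have hg0 : g ≫ ψ.hom ≫ biproduct.π F i = 0 := by
        by_contra hgne
        exact hne (hcase i hgne)
      have := congrArg (fun u => u ≫ (biproduct.ι F i ≫ ψ.inv)) hg0
      simpa using this
    have htot : g = g ≫ ψ.hom ≫ (∑ i : Fin n, biproduct.π F i ≫ biproduct.ι F i) ≫
        ψ.inv := by
      rw [biproduct.total]; simp
    have hgx : g ≫ x = g := by
      conv_rhs => rw [htot]
      rw [hxdef]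
      simp only [Category.assoc, Preadditive.sum_comp, Preadditive.comp_sum]
      simpa using hsum2
    obtain ⟨t1, ht⟩ : ∃ t1 : c ⟶ b, x = t1 ≫ g :=
      Pretriangulated.Triangle.coyoneda_exact₃ _ hT x hxh
    have hz : (𝟙 b - g ≫ t1) ≫ g = 0 := by
      have h1 : (g ≫ t1) ≫ g = g ≫ x := by
        rw [ht]; simp [Category.assoc]
      simp only [Preadditive.sub_comp, Category.id_comp, h1, hgx, sub_self]
    obtain ⟨p1, hp⟩ : ∃ p1 : b ⟶ a, 𝟙 b - g ≫ t1 = p1 ≫ f :=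
      Pretriangulated.Triangle.coyoneda_exact₂ _ hT (𝟙 b - g ≫ t1) hz
    refine ⟨p1, ?_⟩
    intro hpz
    rw [hpz, zero_comp] at hp
    have hid : (𝟙 b : b ⟶ b) = g ≫ t1 := sub_eq_zero.mp hp
    have hfg : f ≫ g = 0 := Pretriangulated.comp_distTriang_mor_zero₁₂ _ hT
    apply hf
    calc f = f ≫ 𝟙 b := by simp
      _ = (f ≫ g) ≫ t1 := by rw [hid]; simp [Category.assoc]
      _ = 0 := by rw [hfg]; simp
end AuxCone
section AuxUV
set_option linter.unusedSectionVars false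

variable {C}

lemma not_hasPath_shift_le {X Y : C} (hnp : ¬ HasPath C X Y) {k : ℤ} (hk : k ≤ 0) :
    ¬ HasPath C X (Y⟦k⟧) := by
  intro hp
  exact hnp (((hp.shift_mono hk).isoTgt (shZero Y).symm).isoTgt (Iso.refl _))

lemma hom_zero_UV {X u z : C} (hu : HasPath C X u) (hz : Indec C z)
    (hznp : ¬ HasPath C X z) (φ : u ⟶ z) : φ = 0 := by
  by_contra hφ
  exact hznp (hu.homStep φ hφ hz)

/-- transfer along a nonzero map via the cone lemma: a path to `b⟦m⟧` gives a path
to `a⟦m+1⟧`. -/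
lemma hasPath_shift_cone (hdec : EveryObjectDecomposes C) {X a b : C}
    (ha : Indec C a) (f : a ⟶ b) (hf : f ≠ 0) {m : ℤ}
    (hp : HasPath C X (b⟦m⟧)) : HasPath C X (a⟦m + 1⟧) := by
  rcases cone_path hdec f hf with ⟨c, hc, ⟨g, hg⟩, ⟨e, he⟩⟩ | ⟨p, hp'⟩
  · have h1 : HasPath C X (c⟦m⟧) :=
      hp.homStep ((shiftFunctor C m).map g) (shift_map_ne_zero hg m) (hc.shift m)
    have h2 : HasPath C X ((a⟦(1 : ℤ)⟧)⟦m⟧) :=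
      h1.homStep ((shiftFunctor C m).map e) (shift_map_ne_zero he m)
        ((ha.shift 1).shift m)
    have h3 : HasPath C X (a⟦1 + m⟧) := h2.isoTgt (shAdd 1 m (1 + m) rfl a)
    exact h3.shift_mono (by omega)
  · have h1 : HasPath C X (a⟦m⟧) :=
      hp.homStep ((shiftFunctor C m).map p) (shift_map_ne_zero hp' m) (ha.shift m)
    exact h1.shift_mono (by omega)

/-- The key vanishing for the heart: `Hom(u, w⟦n⟧) = 0` for `n ≥ 2` when `u, w` lie in
`U ∩ V⟦1⟧`. -/
lemma heart_hom_zero (hdec : EveryObjectDecomposes C) {X u w : C}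
    (hupath : HasPath C X u) (hunp : ¬ HasPath C X (u⟦(-1 : ℤ)⟧))
    (hwpath : HasPath C X w) (hwnp : ¬ HasPath C X (w⟦(-1 : ℤ)⟧))
    {n : ℤ} (hn : 2 ≤ n) (φ : u ⟶ w⟦n⟧) : φ = 0 := by
  by_contra hφ
  rcases cone_path hdec φ hφ with ⟨c, hc, ⟨g, hg⟩, ⟨e, he⟩⟩ | ⟨p, hp⟩
  · -- nonzero w⟦n⟧ ⟶ c and c ⟶ u⟦1⟧; shift by -n and follow the path from w
    have hwiso : w ≅ (w⟦n⟧)⟦-n⟧ := (shZero w).symm ≪≫ shAdd n (-n) 0 (by ring) w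
    have hκ : hwiso.hom ≫ (shiftFunctor C (-n)).map g ≠ 0 :=
      iso_comp_ne_zero (shift_map_ne_zero hg (-n)) hwiso
    have h1 : HasPath C X (c⟦-n⟧) :=
      hwpath.homStep _ hκ (hc.shift (-n))
    have h2 : HasPath C X ((u⟦(1 : ℤ)⟧)⟦-n⟧) :=
      h1.homStep ((shiftFunctor C (-n)).map e) (shift_map_ne_zero he (-n))
        ((hupath.indec_tgt.shift 1).shift (-n))
    have h3 : HasPath C X (u⟦1 + -n⟧) := h2.isoTgt (shAdd 1 (-n) (1 + -n) rfl u)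
    exact hunp (h3.shift_mono (by omega))
  · -- nonzero w⟦n⟧ ⟶ u; shift by -1
    have hwiso : w⟦n - 1⟧ ≅ (w⟦n⟧)⟦-1⟧ := shAdd n (-1) (n - 1) (by ring) w
    have hκ : hwiso.hom ≫ (shiftFunctor C (-1)).map p ≠ 0 :=
      iso_comp_ne_zero (shift_map_ne_zero hp (-1)) hwiso
    have h0 : HasPath C X (w⟦n - 1⟧) :=
      (hwpath.isoTgt (shZero w)).shift_mono (by omega)
    exact hunp (h0.homStep _ hκ (hupath.indec_tgt.shift (-1)))

/-- Boundedness at the level of indecomposables. -/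
lemma phi_all (hdec : EveryObjectDecomposes C)
    (hconn : ∀ A B : C, Indec C A → Indec C B → PathConn C A B)
    {X : C} (hX : Indec C X) (hnp : ¬ HasPath C (X⟦(1 : ℤ)⟧) X) {Y : C}
    (hY : Indec C Y) :
    (∃ n : ℤ, HasPath C X (Y⟦n⟧)) ∧ (∃ m : ℤ, ¬ HasPath C X (Y⟦m⟧)) := by
  have hrtg := pathConn_rtg (hconn X Y hX hY)
  clear hY
  induction hrtg with
  | refl =>
    refine ⟨⟨0, (hasPath_refl hX).isoTgt (shZero X)⟩, ⟨-1, ?_⟩⟩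
    intro hp
    exact hnp ((hp.shift 1).isoTgt
      ((shZero X).symm ≪≫ shAdd (-1) 1 0 (by ring) X))
  | @tail mid b hab hbc ih =>
    obtain ⟨⟨n, hn⟩, ⟨m, hm⟩⟩ := ih
    obtain ⟨hmid, hb, hstep⟩ := hbc
    rcases hstep with ⟨g, hg⟩ | ⟨g, hg⟩ | ⟨s, ⟨e⟩⟩
    · refine ⟨⟨n, hn.homStep ((shiftFunctor C n).map g) (shift_map_ne_zero hg n)
        (hb.shift n)⟩, ⟨m - 1, ?_⟩⟩
      intro hp
      exact hm ((hasPath_shift_cone hdec hmid g hg hp).shift_mono (by omega))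
    · refine ⟨⟨n + 1, hasPath_shift_cone hdec hb g hg hn⟩, ⟨m, ?_⟩⟩
      intro hp
      exact hm (hp.homStep ((shiftFunctor C m).map g) (shift_map_ne_zero hg m)
        (hmid.shift m))
    · have eiso : ∀ k : ℤ, (b⟦k - s⟧) ≅ (mid⟦k⟧) := fun k =>
        (shiftFunctor C (k - s)).mapIso e ≪≫ (shAdd s (k - s) k (by ring) mid).symm
      refine ⟨⟨n - s, hn.isoTgt (eiso n)⟩, ⟨m - s, ?_⟩⟩
      intro hp
      exact hm (hp.isoTgt (eiso m).symm)

end AuxUV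
section AuxMain
set_option linter.unusedSectionVars false

variable {C}

lemma SV1_not_path {X W : C}
    (h : ∃ Z : C, (Indec C Z ∧ ¬ HasPath C X Z) ∧ Nonempty (W ≅ Z⟦(1 : ℤ)⟧)) :
    ¬ HasPath C X (W⟦(-1 : ℤ)⟧) := by
  obtain ⟨Z, ⟨hZi, hZnp⟩, ⟨e⟩⟩ := h
  intro hp
  exact hZnp (hp.isoTgt ((shZero Z).symm ≪≫ shAdd 1 (-1) 0 (by ring) Z ≪≫
    ((shiftFunctor C (-1 : ℤ)).mapIso e).symm))

lemma hom_into_V1_zero {X u W : C} (hu : HasPath C X u)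
    (h : ∃ Z : C, (Indec C Z ∧ ¬ HasPath C X Z) ∧ Nonempty (W ≅ Z⟦(1 : ℤ)⟧))
    (φ : u ⟶ W⟦(-1 : ℤ)⟧) : φ = 0 := by
  obtain ⟨Z, ⟨hZi, hZnp⟩, ⟨e⟩⟩ := h
  have ρ : W⟦(-1 : ℤ)⟧ ≅ Z := (shiftFunctor C (-1 : ℤ)).mapIso e ≪≫
    (shAdd 1 (-1) 0 (by ring) Z).symm ≪≫ shZero Z
  have h0 := hom_zero_UV hu hZi hZnp (φ ≫ ρ.hom)
  calc φ = (φ ≫ ρ.hom) ≫ ρ.inv := by simp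
    _ = 0 := by rw [h0]; simp

lemma split_lemma {X : C} : ∀ (k : ℕ) (F : Fin k → C), (∀ i, Indec C (F i)) →
    ∃ A B : C, A ∈ addClosure C {Y | Indec C Y ∧ HasPath C X Y} ∧
      B ∈ addClosure C {Z | Indec C Z ∧ ¬ HasPath C X Z} ∧ Nonempty ((⨁ F) ≅ A ⊞ B)
  | 0, F, _ => by
    have hz : IsZero (⨁ F) := by
      rw [IsZero.iff_id_eq_zero]; apply biproduct.hom_ext; intro j; exact j.elim0
    exact ⟨⨁ F, ⨁ F, addClosure_of_isZero hz, addClosure_of_isZero hz,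
      ⟨hz.isoZero ≪≫ ((biprod_isZero_iff _ _).2 ⟨hz, hz⟩).isoZero.symm⟩⟩
  | (k + 1), F, hind => by
    obtain ⟨A', B', hA', hB', ⟨e'⟩⟩ :=
      split_lemma k (fun i => F i.succ) (fun i => hind i.succ)
    by_cases hp : HasPath C X (F 0)
    · refine ⟨F 0 ⊞ A', B', addClosure_biprod ⟨hind 0, hp⟩ hA', hB', ⟨?_⟩⟩
      exact biproductSuccIso F ≪≫ biprod.mapIso (Iso.refl _) e' ≪≫
        (biprod.associator _ _ _).symm
    · refine ⟨A', F 0 ⊞ B', hA', addClosure_biprod ⟨hind 0, hp⟩ hB', ⟨?_⟩⟩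
      exact biproductSuccIso F ≪≫ biprod.mapIso (Iso.refl _) e' ≪≫
        (biprod.associator _ _ _).symm ≪≫
        biprod.mapIso (biprod.braiding _ _) (Iso.refl _) ≪≫ biprod.associator _ _ _

lemma bounded_all (hdec : EveryObjectDecomposes C)
    (hconn : ∀ A B : C, Indec C A → Indec C B → PathConn C A B)
    {X : C} (hX : Indec C X) (hnp : ¬ HasPath C (X⟦(1 : ℤ)⟧) X) (W : C) :
    ∃ m n : ℤ, m ≤ n ∧ (W⟦n⟧) ∈ addClosure C {Y | Indec C Y ∧ HasPath C X Y} ∧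
      (W⟦m⟧) ∈ addClosure C {Y | ∃ Z : C, (Indec C Z ∧ ¬ HasPath C X Z) ∧
        Nonempty (Y ≅ Z⟦(1 : ℤ)⟧)} := by
  classical
  obtain ⟨k, F, hind, ⟨eW⟩⟩ := hdec W
  have hphi := fun i => phi_all hdec hconn hX hnp (hind i)
  choose nf hnf using fun i => (hphi i).1
  choose mf hmf using fun i => (hphi i).2
  obtain ⟨N, hN⟩ := Finset.exists_le (Finset.univ.image nf)
  obtain ⟨M', hM'⟩ := Finset.exists_le (Finset.univ.image (fun i => -(mf i)))
  have hNi : ∀ i, nf i ≤ N := fun i =>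
    hN _ (Finset.mem_image_of_mem nf (Finset.mem_univ i))
  have hMi : ∀ i, -M' ≤ mf i := fun i => by
    have h := hM' _ (Finset.mem_image_of_mem (fun i => -(mf i)) (Finset.mem_univ i))
    omega
  refine ⟨min (-M') N, max N (-M'), by omega, ?_, ?_⟩
  · refine ⟨k, fun i => (F i)⟦max N (-M')⟧, ?_, ⟨?_⟩⟩
    · intro i
      exact ⟨(hind i).shift _, (hnf i).shift_mono (le_trans (hNi i) (le_max_left _ _))⟩
    · exact (shiftFunctor C (max N (-M'))).mapIso eW ≪≫
        (shiftFunctor C (max N (-M'))).mapBiproduct F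
  · refine ⟨k, fun i => (F i)⟦min (-M') N⟧, ?_, ⟨?_⟩⟩
    · intro i
      refine ⟨(F i)⟦min (-M') N - 1⟧, ⟨(hind i).shift _, ?_⟩,
        ⟨(shAdd (min (-M') N - 1) 1 (min (-M') N) (by ring) (F i)).symm.symm⟩⟩
      intro hp
      have h2 := hp.shift_mono (Y := F i) (n := min (-M') N - 1) (n' := mf i)
        (by have := hMi i; have := min_le_left (-M') N; omega)
      exact hmf i h2
    · exact (shiftFunctor C (min (-M') N)).mapIso eW ≪≫
        (shiftFunctor C (min (-M') N)).mapBiproduct F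

end AuxMain
/-- in a block, if there is an indecomposable `X` with no path from `X⟦1⟧` to
`X`, then `D` admits a bounded hereditary t-structure, whose heart may be taken to be
`add (U ∩ V⟦1⟧)` where `U = [X→]` is the class of indecomposables with a path from `X` and
`V` is its complement among the indecomposables. -/
theorem stmt_19 (hblock : IsBlock C) (X : C) (hX : Indec C X)
    (h : ¬ HasPath C (X⟦(1 : ℤ)⟧) X) :
    ∃ t : TStruct C, t.Hereditary ∧
      t.heart = addClosure C {W | (Indec C W ∧ HasPath C X W) ∧
        ∃ Z : C, (Indec C Z ∧ ¬ HasPath C X Z) ∧ Nonempty (W ≅ Z⟦(1 : ℤ)⟧)} := by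
  classical
  obtain ⟨-, hdec, hconn⟩ := hblock
  have heart_eq : addClosure C {Y | Indec C Y ∧ HasPath C X Y} ∩
      addClosure C {W | ∃ Z : C, (Indec C Z ∧ ¬ HasPath C X Z) ∧
        Nonempty (W ≅ Z⟦(1 : ℤ)⟧)} =
      addClosure C {W | (Indec C W ∧ HasPath C X W) ∧
        ∃ Z : C, (Indec C Z ∧ ¬ HasPath C X Z) ∧ Nonempty (W ≅ Z⟦(1 : ℤ)⟧)} := by
    apply Set.Subset.antisymm
    · rintro W ⟨⟨na, a, ha, ⟨α⟩⟩, ⟨nb, b, hb, ⟨β⟩⟩⟩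
      refine ⟨na, a, ?_, ⟨α⟩⟩
      intro i
      refine ⟨ha i, (a i)⟦(-1 : ℤ)⟧, ⟨(ha i).1.shift _, ?_⟩,
        ⟨(shZero (a i)).symm ≪≫ shAdd (-1) 1 0 (by ring) (a i)⟩⟩
      intro hP
      have hcomp : ∀ j (φ : a i ⟶ b j), φ = 0 := by
        intro j φ
        have hφ1 : (shiftFunctor C (-1 : ℤ)).map φ = 0 :=
          hom_into_V1_zero hP (hb j) ((shiftFunctor C (-1 : ℤ)).map φ)
        exact (shiftFunctor C (-1 : ℤ)).map_injective
          (by rw [hφ1, Functor.map_zero])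
      exact (ha i).1.1 (isZero_component α β i hcomp)
    · intro W hW
      obtain ⟨n0, f0, hf0, ⟨e0⟩⟩ := hW
      exact ⟨⟨n0, f0, fun i => (hf0 i).1, ⟨e0⟩⟩, ⟨n0, f0, fun i => (hf0 i).2, ⟨e0⟩⟩⟩
  refine ⟨{ le := addClosure C {Y | Indec C Y ∧ HasPath C X Y}
            ge := addClosure C {W | ∃ Z : C, (Indec C Z ∧ ¬ HasPath C X Z) ∧
              Nonempty (W ≅ Z⟦(1 : ℤ)⟧)}
            le_iso := fun {A B} e hA => addClosure_iso hA e.symm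
            ge_iso := fun {A B} e hA => addClosure_iso hA e.symm
            hom_zero := ?_
            le_shift := ?_
            ge_shift := ?_
            exists_triangle := ?_ }, ⟨?_, ?_⟩, ?_⟩
  · -- hom_zero
    rintro A B ⟨na, a, ha, ⟨α⟩⟩ ⟨nb, b, hb, ⟨β⟩⟩ f
    have β' : B⟦(-1 : ℤ)⟧ ≅ ⨁ (fun j => (b j)⟦(-1 : ℤ)⟧) :=
      (shiftFunctor C (-1 : ℤ)).mapIso β ≪≫ (shiftFunctor C (-1 : ℤ)).mapBiproduct b
    refine hom_eq_zero_of_components α β' ?_ f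
    intro i j φ
    exact hom_into_V1_zero (ha i).2 (hb j) φ
  · -- le_shift
    intro Y hY
    have hmap : ∀ Z ∈ {Y : C | Indec C Y ∧ HasPath C X Y},
        (Z⟦(1 : ℤ)⟧) ∈ {Y : C | Indec C Y ∧ HasPath C X Y} :=
      fun Z hZ => ⟨hZ.1.shift 1, hZ.2.shiftStep⟩
    exact addClosure_shift hmap hY
  · -- ge_shift
    intro Y hY
    have hmap : ∀ Z ∈ {W : C | ∃ Z : C, (Indec C Z ∧ ¬ HasPath C X Z) ∧
        Nonempty (W ≅ Z⟦(1 : ℤ)⟧)},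
        (Z⟦(-1 : ℤ)⟧) ∈ {W : C | ∃ Z : C, (Indec C Z ∧ ¬ HasPath C X Z) ∧
        Nonempty (W ≅ Z⟦(1 : ℤ)⟧)} := by
      rintro Z ⟨Z₀, ⟨hi, hnp'⟩, ⟨e⟩⟩
      refine ⟨Z₀⟦(-1 : ℤ)⟧, ⟨hi.shift _, not_hasPath_shift_le hnp' (by omega)⟩, ⟨?_⟩⟩
      exact (shiftFunctor C (-1 : ℤ)).mapIso e ≪≫ (shAdd 1 (-1) 0 (by ring) Z₀).symm ≪≫
        shAdd (-1) 1 0 (by ring) Z₀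
    exact addClosure_shift hmap hY
  · -- exists_triangle
    intro W
    obtain ⟨k, F, hind, ⟨eW⟩⟩ := hdec W
    obtain ⟨A, B₀, hA, hB₀, ⟨e2⟩⟩ := split_lemma k F hind
    have φ : W ≅ A ⊞ B₀ := eW ≪≫ e2
    have θ : B₀ ≅ (B₀⟦(1 : ℤ)⟧)⟦(-1 : ℤ)⟧ :=
      (shZero B₀).symm ≪≫ shAdd 1 (-1) 0 (by ring) B₀
    refine ⟨A, B₀⟦(1 : ℤ)⟧, biprod.inl ≫ φ.inv, φ.hom ≫ biprod.snd ≫ θ.hom, 0,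
      ?_, hA, ?_⟩
    · refine Pretriangulated.isomorphic_distinguished _
        (Pretriangulated.binaryBiproductTriangle_distinguished A B₀) _ ?_
      refine Triangle.isoMk _ _ (Iso.refl A) φ θ.symm ?_ ?_ ?_
      · exact (by simp : (biprod.inl ≫ φ.inv) ≫ φ.hom = 𝟙 A ≫ biprod.inl)
      · exact (by simp : (φ.hom ≫ biprod.snd ≫ θ.hom) ≫ θ.inv = φ.hom ≫ biprod.snd)
      · exact (by simp : (0 : _ ⟶ _) ≫ (shiftFunctor C (1 : ℤ)).map (𝟙 A) = θ.inv ≫ 0)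
    · have hmap : ∀ Z ∈ {Z : C | Indec C Z ∧ ¬ HasPath C X Z},
          (Z⟦(1 : ℤ)⟧) ∈ {W : C | ∃ Z : C, (Indec C Z ∧ ¬ HasPath C X Z) ∧
          Nonempty (W ≅ Z⟦(1 : ℤ)⟧)} :=
        fun Z hZ => ⟨Z, hZ, ⟨Iso.refl _⟩⟩
      exact addClosure_shift hmap hB₀
  · -- bounded
    intro W
    exact bounded_all hdec hconn hX h W
  · -- hereditary vanishing
    intro A B hA hB n hn f
    have hA' : A ∈ addClosure C {Y | Indec C Y ∧ HasPath C X Y} ∩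
        addClosure C {W | ∃ Z : C, (Indec C Z ∧ ¬ HasPath C X Z) ∧
          Nonempty (W ≅ Z⟦(1 : ℤ)⟧)} := hA
    have hB' : B ∈ addClosure C {Y | Indec C Y ∧ HasPath C X Y} ∩
        addClosure C {W | ∃ Z : C, (Indec C Z ∧ ¬ HasPath C X Z) ∧
          Nonempty (W ≅ Z⟦(1 : ℤ)⟧)} := hB
    rw [heart_eq] at hA' hB'
    obtain ⟨na, a, ha, ⟨α⟩⟩ := hA'
    obtain ⟨nb, b, hb, ⟨β⟩⟩ := hB'
    have β' : B⟦n⟧ ≅ ⨁ (fun j => (b j)⟦n⟧) :=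
      (shiftFunctor C n).mapIso β ≪≫ (shiftFunctor C n).mapBiproduct b
    refine hom_eq_zero_of_components α β' ?_ f
    intro i j φ
    exact heart_hom_zero hdec (ha i).1.2 (SV1_not_path (ha i).2)
      (hb j).1.2 (SV1_not_path (hb j).2) hn φ
  · -- heart identification
    exact heart_eq
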